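/- arXiv:2509.05083 — 2 statements merged into one kernel-verified Lean document; each statement's English description precedes it below -/
import Mathlib

section
/- Let H₁ and H₂ be complex Hilbert spaces, let σ > 0 be a real number, let R : H₁ → H₁ and V : H₂ → H₁ be isometric bounded linear operators whose ranges satisfy Im(V) ⊥ Im(R) and Im(V) ⊕ Im(R) = H₁, and let U : H₂ → H₂ be a unitary operator. Then the Brownian unitary, i.e. the block operator [[R, σV], [0, U]] on the Hilbert space direct sum H₁ ⊕ H₂ given by h₁ ⊕ h₂ ↦ (R h₁ + σ·V h₂) ⊕ U h₂, is a 2-isometry. -/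
/-!
For `p = (a, b)`, Pythagoras (the ranges of `R` and `V` are orthogonal) gives
`‖B p‖² = ‖p‖² + σ²‖b‖²`, and the excess `σ²‖b‖²` is unchanged by `B` because `U` is isometric.
Whenever `‖T x‖² - ‖x‖²` is `T`-invariant, the second difference `‖x‖² - 2‖T x‖² + ‖T² x‖²`
vanishes; this is the quadratic form of the self-adjoint operator `1 - 2 T*T + T*²T²`, which
is therefore zero.
-/

open ContinuousLinearMap

open scoped InnerProductSpace

namespace ContinuousLinearMap

variable {𝕜 E : Type*} [RCLike 𝕜] [NormedAddCommGroup E] [InnerProductSpace 𝕜 E] [CompleteSpace E]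

def IsTwoIsometry (T : E →L[𝕜] E) : Prop :=
  1 - 2 • (adjoint T * T) + adjoint T ^ 2 * T ^ 2 = 0

theorem isSelfAdjoint_two_isometry_defect (T : E →L[𝕜] E) :
    IsSelfAdjoint (1 - 2 • (adjoint T * T) + adjoint T ^ 2 * T ^ 2) := by
  rw [← star_eq_adjoint, ← star_pow]
  exact ((IsSelfAdjoint.one _).sub ((IsSelfAdjoint.all 2).smul (.star_mul_self T))).add
    (.star_mul_self _)

theorem inner_two_isometry_defect_apply_self (T : E →L[𝕜] E) (x : E) :
    ⟪(1 - 2 • (adjoint T * T) + adjoint T ^ 2 * T ^ 2 : E →L[𝕜] E) x, x⟫_𝕜 =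
      ((‖x‖ ^ 2 - 2 * ‖T x‖ ^ 2 + ‖T (T x)‖ ^ 2 : ℝ) : 𝕜) := by
  simp only [add_apply, sub_apply, one_apply_eq_self, mul_apply_eq_comp, sq,
    two_smul, inner_add_left, inner_sub_left, adjoint_inner_left,
    inner_self_eq_norm_sq_to_K]
  push_cast
  ring

theorem isTwoIsometry_iff_norm_sq {T : E →L[𝕜] E} :
    IsTwoIsometry T ↔ ∀ x, ‖x‖ ^ 2 - 2 * ‖T x‖ ^ 2 + ‖T (T x)‖ ^ 2 = 0 := by
  rw [IsTwoIsometry, ← coe_inj, toLinearMap_zero,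
    ← (isSelfAdjoint_two_isometry_defect T).isSymmetric.inner_map_self_eq_zero]
  simp only [coe_coe, inner_two_isometry_defect_apply_self, RCLike.ofReal_eq_zero]

theorem IsTwoIsometry.of_norm_sq_eq_add {T : E →L[𝕜] E} (q : E → ℝ)
    (hT : ∀ x, ‖T x‖ ^ 2 = ‖x‖ ^ 2 + q x) (hq : ∀ x, q (T x) = q x) : IsTwoIsometry T :=
  isTwoIsometry_iff_norm_sq.mpr fun x => by rw [hT (T x), hT x, hq]; ring

end ContinuousLinearMap

theorem norm_add_smul_sq_of_inner_eq_zero {𝕜 E : Type*} [RCLike 𝕜] [NormedAddCommGroup E]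
    [InnerProductSpace 𝕜 E] {x y : E} (h : ⟪x, y⟫_𝕜 = 0) (c : 𝕜) :
    ‖x + c • y‖ ^ 2 = ‖x‖ ^ 2 + ‖c‖ ^ 2 * ‖y‖ ^ 2 := by
  rw [sq, norm_add_sq_eq_norm_sq_add_norm_sq_of_inner_eq_zero x (c • y)
    (by rw [inner_smul_right, h, mul_zero]), norm_smul]
  ring

theorem brownian_unitary_two_isometry_general {H₁ H₂ : Type*}
    [NormedAddCommGroup H₁] [InnerProductSpace ℂ H₁] [CompleteSpace H₁]
    [NormedAddCommGroup H₂] [InnerProductSpace ℂ H₂] [CompleteSpace H₂]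
    (σ : ℝ)
    (R : H₁ →L[ℂ] H₁) (hR : ∀ x : H₁, ‖R x‖ = ‖x‖)
    (V : H₂ →L[ℂ] H₁) (hV : ∀ x : H₂, ‖V x‖ = ‖x‖)
    (hVR : ∀ (k : H₂) (l : H₁), (inner ℂ (V k) (R l) : ℂ) = 0)
    (U : H₂ →L[ℂ] H₂) (hU : ∀ x : H₂, ‖U x‖ = ‖x‖)
    (B : WithLp 2 (H₁ × H₂) →L[ℂ] WithLp 2 (H₁ × H₂))
    (hB : ∀ p : WithLp 2 (H₁ × H₂), B p =
      (WithLp.equiv 2 (H₁ × H₂)).symm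
        (R ((WithLp.equiv 2 (H₁ × H₂)) p).1 + σ • V ((WithLp.equiv 2 (H₁ × H₂)) p).2,
          U ((WithLp.equiv 2 (H₁ × H₂)) p).2)) :
    1 - 2 • (adjoint B * B) + adjoint B ^ 2 * B ^ 2 = 0 := by
  have hfst : ∀ p, ‖(B p).fst‖ ^ 2 = ‖p.fst‖ ^ 2 + σ ^ 2 * ‖p.snd‖ ^ 2 := fun p => by
    rw [hB]
    change ‖R p.fst + σ • V p.snd‖ ^ 2 = _
    rw [← Complex.coe_smul, norm_add_smul_sq_of_inner_eq_zero (inner_eq_zero_symm.mp (hVR _ _))]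
    simp [hR, hV]
  have hsnd : ∀ p, ‖(B p).snd‖ = ‖p.snd‖ := fun p => by rw [hB]; exact hU _
  refine IsTwoIsometry.of_norm_sq_eq_add (fun p => σ ^ 2 * ‖p.snd‖ ^ 2) (fun p => ?_)
    (fun p => by simp only [hsnd])
  rw [WithLp.prod_norm_sq_eq_of_L2 (B p), WithLp.prod_norm_sq_eq_of_L2 p, hfst, hsnd]
  ring

/-- A Brownian unitary, i.e. the block operator `[[R, σV], [0, U]]` on `H₁ ⊕ H₂` where
`R` and `V` are isometries with `Im V ⊥ Im R`, `Im V ⊕ Im R = H₁`, `σ > 0`, and `U` is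
unitary, is a 2-isometry. -/
theorem brownian_unitary_two_isometry {H₁ H₂ : Type*}
    [NormedAddCommGroup H₁] [InnerProductSpace ℂ H₁] [CompleteSpace H₁]
    [NormedAddCommGroup H₂] [InnerProductSpace ℂ H₂] [CompleteSpace H₂]
    (σ : ℝ) (hσ : 0 < σ)
    (R : H₁ →L[ℂ] H₁) (hR : ∀ x : H₁, ‖R x‖ = ‖x‖)
    (V : H₂ →L[ℂ] H₁) (hV : ∀ x : H₂, ‖V x‖ = ‖x‖)
    (hVR : ∀ (k : H₂) (l : H₁), (inner ℂ (V k) (R l) : ℂ) = 0)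
    (hspan : LinearMap.range (V : H₂ →ₗ[ℂ] H₁) ⊔ LinearMap.range (R : H₁ →ₗ[ℂ] H₁) = ⊤)
    (U : H₂ →L[ℂ] H₂) (hU : ∀ x : H₂, ‖U x‖ = ‖x‖) (hUsurj : Function.Surjective U)
    (B : WithLp 2 (H₁ × H₂) →L[ℂ] WithLp 2 (H₁ × H₂))
    (hB : ∀ p : WithLp 2 (H₁ × H₂), B p =
      (WithLp.equiv 2 (H₁ × H₂)).symm
        (R ((WithLp.equiv 2 (H₁ × H₂)) p).1 + σ • V ((WithLp.equiv 2 (H₁ × H₂)) p).2,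
          U ((WithLp.equiv 2 (H₁ × H₂)) p).2)) :
    1 - 2 • (adjoint B * B) + adjoint B ^ 2 * B ^ 2 = 0 :=
  brownian_unitary_two_isometry_general σ R hR V hV hVR U hU B hB
end

section
/- Let H be an infinite-dimensional complex Hilbert space. Then the set of 3-isometries on H is dense in B(H) in the strong operator topology; that is, for every T ∈ B(H), every ε > 0 and every finite family of vectors x_1, …, x_k ∈ H there exists a 3-isometry S ∈ B(H) with ‖S x_i − T x_i‖ < ε for all i. -/
/-! If `q * q = 0` then `(1 + q) ^ n = 1 + n • q`, and the defining polynomial of a 3-isometry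
vanishes identically at `1 + q`; so it suffices to approximate `T - 1` strongly by square-zero
operators. Let `p` be the orthogonal projection onto the span `K` of the given vectors and let
`V` map `K` isometrically into `(K + (T - 1) K)ᗮ`, which infinite dimension makes possible. Then
`Q = ((T - 1) p + δ V) (p - δ⁻¹ p (T - 1) V*)` has `Q * Q = 0`, because the second factor
annihilates the first, and `Q = T - 1 + δ V` on `K`. -/

open ContinuousLinearMap InnerProductSpace Submodule Set Filter Topology

section ThreeIsometry

variable {R : Type*} [Ring R]

lemma one_add_pow_of_mul_self_eq_zero {z : R} (hz : z * z = 0) (n : ℕ) :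
    (1 + z) ^ n = 1 + n • z := by
  induction n with
  | zero => simp
  | succ n ih =>
    rw [pow_succ, ih, succ_nsmul]
    simp only [add_mul, one_mul, mul_add, mul_one, smul_mul_assoc, hz, smul_zero, add_zero]
    abel

lemma add_mul_sub_mul_self_eq_zero {a p v w : R} (hpv : p * v = 0) (hwv : w * v = p)
    (hwap : w * a * p = 0) :
    (a * p + v) * (p - p * a * w) * ((a * p + v) * (p - p * a * w)) = 0 := by
  have hfactors : (p - p * a * w) * (a * p + v) = 0 := by
    calc (p - p * a * w) * (a * p + v)
        = p * a * p + p * v - p * a * (w * a * p) - p * a * (w * v) := by noncomm_ring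
      _ = 0 := by rw [hpv, hwv, hwap]; noncomm_ring
  rw [mul_assoc, ← mul_assoc (p - _), hfactors, zero_mul, mul_zero]

variable [StarRing R]

def IsThreeIsometry (s : R) : Prop :=
  -1 + 3 • (star s * s) - 3 • (star s ^ 2 * s ^ 2) + star s ^ 3 * s ^ 3 = 0

lemma isThreeIsometry_one_add_of_mul_self_eq_zero {q : R} (hq : q * q = 0) :
    IsThreeIsometry (1 + q) := by
  have hq' : star q * star q = 0 := by rw [← star_mul, hq, star_zero]
  simp only [IsThreeIsometry, star_add, star_one, one_add_pow_of_mul_self_eq_zero hq,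
    one_add_pow_of_mul_self_eq_zero hq']
  simp only [add_mul, mul_add, one_mul, mul_one, smul_mul_assoc, mul_smul_comm, smul_smul,
    smul_add]
  module

end ThreeIsometry

lemma exists_pos_forall_mul_lt {ι : Type*} [Finite ι] (c : ι → ℝ) {ε : ℝ} (hε : 0 < ε) :
    ∃ δ > 0, ∀ i, δ * c i < ε := by
  have h : ∀ i, ∀ᶠ δ in 𝓝[>] (0 : ℝ), δ * c i < ε := fun i =>
    nhdsWithin_le_nhds <| (continuous_id.mul continuous_const).tendsto' 0 0 (zero_mul _)
      |>.eventually (gt_mem_nhds hε)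
  exact ((eventually_all.2 h).and self_mem_nhdsWithin).exists.imp fun δ hδ => ⟨hδ.2, hδ.1⟩

section RankOne

variable {𝕜 E ι : Type*} [RCLike 𝕜] [NormedAddCommGroup E] [InnerProductSpace 𝕜 E] [Fintype ι]

lemma sum_rankOne_apply_sum_smul {u : ι → E} (hu : Orthonormal 𝕜 u) (f : ι → E) (c : ι → 𝕜) :
    (∑ j, rankOne 𝕜 (f j) (u j)) (∑ j, c j • u j) = ∑ j, c j • f j := by
  rw [sum_apply]
  simp only [rankOne_apply, hu.inner_right_fintype]

lemma sum_rankOne_mul_sum_rankOne {v : ι → E} (hv : Orthonormal 𝕜 v) (u w : ι → E) :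
    (∑ j, rankOne 𝕜 (w j) (v j)) * (∑ j, rankOne 𝕜 (v j) (u j)) = ∑ j, rankOne 𝕜 (w j) (u j) := by
  ext z
  rw [mul_apply_eq_comp]
  convert sum_rankOne_apply_sum_smul hv w (fun j => ⟪u j, z⟫_𝕜) using 2 <;> simp [sum_apply]

lemma sum_rankOne_self_apply_of_mem_span {u : ι → E} (hu : Orthonormal 𝕜 u) {z : E}
    (hz : z ∈ span 𝕜 (range u)) : (∑ j, rankOne 𝕜 (u j) (u j)) z = z := by
  obtain ⟨c, rfl⟩ := (mem_span_range_iff_exists_fun 𝕜).1 hz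
  exact sum_rankOne_apply_sum_smul hu u c

lemma norm_sum_rankOne_apply_of_mem_span {u f : ι → E} (hu : Orthonormal 𝕜 u)
    (hf : Orthonormal 𝕜 f) {z : E} (hz : z ∈ span 𝕜 (range u)) :
    ‖(∑ j, rankOne 𝕜 (f j) (u j)) z‖ = ‖z‖ := by
  obtain ⟨c, rfl⟩ := (mem_span_range_iff_exists_fun 𝕜).1 hz
  rw [sum_rankOne_apply_sum_smul hu, norm_eq_sqrt_re_inner (𝕜 := 𝕜),
    norm_eq_sqrt_re_inner (𝕜 := 𝕜), hf.inner_sum, hu.inner_sum]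

lemma sum_rankOne_apply_eq_zero {u : ι → E} (f : ι → E) {z : E} (hz : ∀ j, ⟪u j, z⟫_𝕜 = 0) :
    (∑ j, rankOne 𝕜 (f j) (u j)) z = 0 := by
  simp [sum_apply, hz]

lemma sum_rankOne_apply_mem_span (u f : ι → E) (z : E) :
    (∑ j, rankOne 𝕜 (f j) (u j)) z ∈ span 𝕜 (range f) := by
  simp only [sum_apply, rankOne_apply]
  exact sum_mem fun j _ => smul_mem _ _ (subset_span (mem_range_self j))

end RankOne

section Orthonormal

variable {𝕜 E : Type*} [RCLike 𝕜] [NormedAddCommGroup E] [InnerProductSpace 𝕜 E]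

lemma exists_orthonormal_of_not_finiteDimensional (hE : ¬ FiniteDimensional 𝕜 E) (ι : Type*)
    [Finite ι] : ∃ f : ι → E, Orthonormal 𝕜 f := by
  obtain ⟨n, ⟨e⟩⟩ := Finite.exists_equiv_fin ι
  have hn : (n : Cardinal) ≤ Module.rank 𝕜 E :=
    Cardinal.natCast_lt_aleph0.le.trans (not_lt.1 (mt Module.rank_lt_aleph0_iff.1 hE))
  obtain ⟨v, hv⟩ := exists_linearIndependent_of_le_rank hn
  exact ⟨gramSchmidtNormed 𝕜 v ∘ e, (gramSchmidtNormed_orthonormal hv).comp e e.injective⟩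

lemma Submodule.exists_orthonormal_mem_orthogonal (hE : ¬ FiniteDimensional 𝕜 E)
    (K : Submodule 𝕜 E) [FiniteDimensional 𝕜 K] (ι : Type*) [Finite ι] :
    ∃ f : ι → E, Orthonormal 𝕜 f ∧ ∀ j, f j ∈ Kᗮ := by
  have hK : ¬ FiniteDimensional 𝕜 Kᗮ := fun _ => hE <| by
    have : FiniteDimensional 𝕜 ↥(K ⊔ Kᗮ) := inferInstance
    rw [sup_orthogonal_of_hasOrthogonalProjection] at this
    exact topEquiv.finiteDimensional
  obtain ⟨f, hf⟩ := exists_orthonormal_of_not_finiteDimensional hK ι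
  exact ⟨fun j => f j, hf.comp_linearIsometry Kᗮ.subtypeₗᵢ, fun j => (f j).2⟩

lemma Submodule.exists_orthonormal_span_eq (K : Submodule 𝕜 E) [FiniteDimensional 𝕜 K] :
    ∃ (n : ℕ) (u : Fin n → E), Orthonormal 𝕜 u ∧ span 𝕜 (range u) = K := by
  let b := stdOrthonormalBasis 𝕜 K
  refine ⟨_, fun j => b j, b.orthonormal.comp_linearIsometry K.subtypeₗᵢ, ?_⟩
  rw [show (fun j => (b j : E)) = K.subtype ∘ b from rfl, range_comp, span_image,
    ← b.coe_toBasis, b.toBasis.span_eq, map_subtype_top]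

end Orthonormal

theorem exists_mul_self_eq_zero_norm_apply_sub_eq {𝕜 E ι : Type*} [RCLike 𝕜]
    [NormedAddCommGroup E] [InnerProductSpace 𝕜 E] [Finite ι]
    (hE : ¬ FiniteDimensional 𝕜 E) (A : E →L[𝕜] E) (x : ι → E) {δ : ℝ} (hδ : 0 < δ) :
    ∃ Q : E →L[𝕜] E, Q * Q = 0 ∧ ∀ i, ‖Q (x i) - A (x i)‖ = δ * ‖x i‖ := by
  set K := span 𝕜 (range x)
  have : FiniteDimensional 𝕜 K := FiniteDimensional.span_of_finite 𝕜 (finite_range x)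
  obtain ⟨n, u, hu, hspan⟩ := K.exists_orthonormal_span_eq
  set G := K ⊔ K.map (A : E →ₗ[𝕜] E)
  obtain ⟨f, hf, hfG⟩ := G.exists_orthonormal_mem_orthogonal hE (Fin n)
  have hKG : K ≤ G := le_sup_left
  set p := ∑ j, rankOne 𝕜 (u j) (u j)
  set V := ∑ j, rankOne 𝕜 (f j) (u j)
  set W := ∑ j, rankOne 𝕜 (u j) (f j)
  have hpV : p * V = 0 := by
    ext z
    refine sum_rankOne_apply_eq_zero u fun j => inner_right_of_mem_orthogonal
      (hKG (hspan ▸ subset_span (mem_range_self j))) ?_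
    exact span_le.2 (range_subset_iff.2 hfG) (sum_rankOne_apply_mem_span u f z)
  have hWAp : W * A * p = 0 := by
    ext z
    refine sum_rankOne_apply_eq_zero u fun j => inner_left_of_mem_orthogonal ?_ (hfG j)
    exact mem_sup_right (mem_map_of_mem (hspan ▸ sum_rankOne_apply_mem_span u u z))
  have hδ' : (δ : 𝕜) ≠ 0 := by exact_mod_cast hδ.ne'
  refine ⟨_, add_mul_sub_mul_self_eq_zero (a := A) (p := p) (v := (δ : 𝕜) • V) (w := (δ : 𝕜)⁻¹ • W)
    ?_ ?_ ?_, fun i => ?_⟩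
  · rw [mul_smul_comm, hpV, smul_zero]
  · rw [smul_mul_smul_comm, inv_mul_cancel₀ hδ', one_smul, sum_rankOne_mul_sum_rankOne hf]
  · rw [smul_mul_assoc, smul_mul_assoc, hWAp, smul_zero]
  have hxK : x i ∈ K := subset_span (mem_range_self i)
  have hpx : p (x i) = x i := sum_rankOne_self_apply_of_mem_span hu (hspan ▸ hxK)
  have hWx : W (x i) = 0 :=
    sum_rankOne_apply_eq_zero u fun j => inner_left_of_mem_orthogonal (hKG hxK) (hfG j)
  have hVx : ‖V (x i)‖ = ‖x i‖ := norm_sum_rankOne_apply_of_mem_span hu hf (hspan ▸ hxK)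
  simp [mul_apply_eq_comp, hpx, hWx, norm_smul, hVx, hδ.le]

/-- On an infinite-dimensional complex Hilbert space, the set of 3-isometries is dense
in `B(H)` in the strong operator topology. -/
theorem three_isometries_SOT_dense {H : Type*} [NormedAddCommGroup H]
    [InnerProductSpace ℂ H] [CompleteSpace H] (hH : ¬ FiniteDimensional ℂ H) :
    ∀ T : H →L[ℂ] H, ∀ ε : ℝ, 0 < ε → ∀ (k : ℕ) (x : Fin k → H),
      ∃ S : H →L[ℂ] H,
        (-1 + 3 • (adjoint S * S) - 3 • (adjoint S ^ 2 * S ^ 2) + adjoint S ^ 3 * S ^ 3 = 0) ∧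
        ∀ i, ‖S (x i) - T (x i)‖ < ε := by
  intro T ε hε k x
  obtain ⟨δ, hδ, hδx⟩ := exists_pos_forall_mul_lt (fun i => ‖x i‖) hε
  obtain ⟨Q, hQ, hQx⟩ := exists_mul_self_eq_zero_norm_apply_sub_eq hH (T - 1) x hδ
  have hS : IsThreeIsometry (1 + Q) := isThreeIsometry_one_add_of_mul_self_eq_zero hQ
  refine ⟨1 + Q, by simpa only [IsThreeIsometry, star_eq_adjoint] using hS, fun i => ?_⟩
  calc ‖(1 + Q) (x i) - T (x i)‖ = ‖Q (x i) - (T - 1) (x i)‖ := by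
        congr 1; simp only [add_apply, sub_apply]; abel
    _ = δ * ‖x i‖ := hQx i
    _ < ε := hδx i
end
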